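/- If G is a 2-connected graph and P is a simple path between two distinct vertices u, v of G (with new internal vertices not in G), then the graph obtained by adding P to G is 2-connected. -/

import Mathlib

open SimpleGraph

/-- Two internally disjoint (and edge-disjoint) `s`-`t` paths exist in `G`, i.e. κ_G(s,t) ≥ 2. -/
def TwoInternallyDisjointPaths {V : Type*} (G : SimpleGraph V) (s t : V) : Prop :=
  ∃ p q : G.Walk s t, p.IsPath ∧ q.IsPath ∧ (∀ e ∈ p.edges, e ∉ q.edges) ∧
    ∀ v ∈ p.support, v ∈ q.support → v = s ∨ v = t

/-- A graph is 2-connected: at least 3 vertices and two internally disjoint paths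
between every pair of distinct vertices. -/
def TwoConnected {V : Type*} [Fintype V] (G : SimpleGraph V) : Prop :=
  3 ≤ Fintype.card V ∧ ∀ s t : V, s ≠ t → TwoInternallyDisjointPaths G s t

/-- The graph obtained from `G` by adding a simple `u`-`v` path with `n` new internal
vertices (the vertices of `Fin n`): if `n = 0` we just add the edge `uv`; otherwise we add
the path `u, 0, 1, …, n-1, v`. -/
def AddPath {V : Type*} (G : SimpleGraph V) (u v : V) (n : ℕ) : SimpleGraph (V ⊕ Fin n) :=
  SimpleGraph.fromRel (fun a b =>
    (∃ x y, a = Sum.inl x ∧ b = Sum.inl y ∧ G.Adj x y) ∨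
    (n = 0 ∧ a = Sum.inl u ∧ b = Sum.inl v) ∨
    (∃ i : Fin n, (i : ℕ) = 0 ∧ a = Sum.inl u ∧ b = Sum.inr i) ∨
    (∃ i : Fin n, (i : ℕ) = n - 1 ∧ a = Sum.inr i ∧ b = Sum.inl v) ∨
    (∃ i j : Fin n, (j : ℕ) = (i : ℕ) + 1 ∧ a = Sum.inr i ∧ b = Sum.inr j))

/-!
Two vertices of a cycle are joined by its two arcs, which are internally disjoint paths. Two old
vertices keep the two paths they have in `G`. Every other pair contains a new vertex, and both
vertices of the pair lie on one cycle made of the new path closed up by a `v`-`u` path `r` of `G`: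
take `r` through the old vertex of the pair (or through `u` if there is none). Such an `r` exists
for every vertex `x` of a 2-connected graph: two internally disjoint `x`-`u` paths form a cycle,
and of two internally disjoint `v`-`x` paths one first reaches this cycle away from `u`; go around
the cycle from `u` through `x` to that point, then back to `v`.
-/

namespace SimpleGraph.Walk

variable {V : Type*} {G : SimpleGraph V}

theorem IsPath.append {u v w : V} {p : G.Walk u v} {q : G.Walk v w} (hp : p.IsPath)
    (hq : q.IsPath) (h : ∀ x ∈ p.support, x ∈ q.support → x = v) : (p.append q).IsPath := by
  rw [isPath_def, support_append, List.nodup_append]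
  refine ⟨hp.support_nodup, hq.support_nodup.sublist q.support.tail_sublist, ?_⟩
  rintro x hxp _ hxq rfl
  obtain rfl := h x hxp (List.mem_of_mem_tail hxq)
  exact (List.nodup_cons.mp (q.cons_tail_support ▸ hq.support_nodup)).1 hxq

theorem IsPath.exists_isPath_first_mem {a b : V} (T : Set V) {w : G.Walk a b} (hw : w.IsPath)
    (hb : b ∈ T) :
    ∃ c ∈ T, ∃ w' : G.Walk a c, w'.IsPath ∧ w'.support ⊆ w.support ∧
      ∀ y ∈ w'.support, y ∈ T → y = c := by
  induction w with
  | nil => exact ⟨_, hb, .nil, .nil, by simp, by simp⟩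
  | @cons a x b h p ih =>
    by_cases ha : a ∈ T
    · exact ⟨a, ha, .nil, .nil, by simp, by simp⟩
    obtain ⟨c, hc, w', hw', hsub, hfirst⟩ := ih hw.of_cons hb
    refine ⟨c, hc, cons h w', hw'.cons fun haw' => ?_, ?_, ?_⟩
    · exact ((cons_isPath_iff _ _).mp hw).2 (hsub haw')
    · simpa [support_cons] using List.subset_cons_of_subset a hsub
    · simp only [support_cons, List.mem_cons, forall_eq_or_imp]
      exact ⟨fun haT => absurd haT ha, hfirst⟩

namespace IsCycle

theorem twoInternallyDisjointPaths {s t : V} {c : G.Walk s s} (hc : c.IsCycle)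
    (ht : t ∈ c.support) (hst : s ≠ t) : TwoInternallyDisjointPaths G s t := by
  classical
  have hc' : ((c.takeUntil t ht).append (c.dropUntil t ht)).IsCycle := (c.take_spec ht).symm ▸ hc
  have hnil : ¬ (c.takeUntil t ht).Nil := not_nil_of_ne hst
  refine ⟨c.takeUntil t ht, (c.dropUntil t ht).reverse, hc.isPath_takeUntil ht,
    (hc'.isPath_of_append_right hnil).reverse, ?_, ?_⟩
  · intro e hp hd
    rw [edges_reverse, List.mem_reverse] at hd
    exact hc.isTrail.disjoint_edges_takeUntil_dropUntil ht hp hd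
  · intro a hp hd
    rw [support_reverse, List.mem_reverse] at hd
    have htails := hc'.support_nodup
    rw [tail_support_append, List.nodup_append'] at htails
    rcases (mem_support_iff _).mp hp with rfl | hp
    · exact .inl rfl
    rcases (mem_support_iff _).mp hd with rfl | hd
    · exact .inr rfl
    exact absurd hd (htails.2.2 hp)

theorem twoInternallyDisjointPaths_of_mem {a s t : V} {c : G.Walk a a} (hc : c.IsCycle)
    (hs : s ∈ c.support) (ht : t ∈ c.support) (hst : s ≠ t) :
    TwoInternallyDisjointPaths G s t := by
  classical
  exact (hc.rotate hs).twoInternallyDisjointPaths ((c.mem_support_rotate_iff s hs).mpr ht) hst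

end IsCycle

end SimpleGraph.Walk

section

variable {V : Type*} {G : SimpleGraph V}

theorem TwoInternallyDisjointPaths.map {W : Type*} {H : SimpleGraph W} (f : G →g H)
    (hf : Function.Injective f) {s t : V} (h : TwoInternallyDisjointPaths G s t) :
    TwoInternallyDisjointPaths H (f s) (f t) := by
  obtain ⟨p, q, hp, hq, hpq, hsupp⟩ := h
  refine ⟨p.map f, q.map f, hp.map hf, hq.map hf, ?_, ?_⟩
  · simp only [Walk.edges_map, List.mem_map]
    rintro _ ⟨e, he, rfl⟩ ⟨e', he', hee'⟩
    exact hpq e he (Sym2.map.injective hf hee' ▸ he')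
  · simp only [Walk.support_map, List.mem_map]
    rintro _ ⟨a, ha, rfl⟩ ⟨a', ha', haa'⟩
    obtain rfl : a = a' := (hf haa').symm
    exact (hsupp a ha ha').imp (congrArg f) (congrArg f)

theorem exists_isPath_mem_support_of_path_to_cycle {x u v s : V} {P Q : G.Walk x u}
    (hP : P.IsPath) (hQ : Q.IsPath) (hPQ : ∀ a ∈ P.support, a ∈ Q.support → a = x ∨ a = u)
    {S : G.Walk v s} (hS : S.IsPath) (hsP : s ∈ P.support) (hsu : s ≠ u)
    (hSPQ : ∀ a ∈ S.support, a ∈ P.support ∨ a ∈ Q.support → a = s) :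
    ∃ r : G.Walk u v, r.IsPath ∧ x ∈ r.support := by
  classical
  have hu : u ∉ (P.takeUntil s hsP).support := fun hu =>
    (P.take_spec hsP ▸ hP).ne_of_mem_support_of_append hsu.symm hu
      (P.dropUntil s hsP).end_mem_support rfl
  refine ⟨Q.reverse.append ((P.takeUntil s hsP).append S.reverse), hQ.reverse.append ?_ ?_, ?_⟩
  · refine (hP.takeUntil hsP).append hS.reverse fun a haP haS => ?_
    rw [Walk.support_reverse, List.mem_reverse] at haS
    exact hSPQ a haS (.inl (P.support_takeUntil_subset_support hsP haP))
  · intro a haQ ha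
    rw [Walk.support_reverse, List.mem_reverse] at haQ
    rw [Walk.mem_support_append_iff, Walk.support_reverse, List.mem_reverse] at ha
    rcases ha with haP | haS
    · exact (hPQ a (P.support_takeUntil_subset_support hsP haP) haQ).resolve_right
        (by rintro rfl; exact hu haP)
    · obtain rfl := hSPQ a haS (.inr haQ)
      exact (hPQ a hsP haQ).resolve_right hsu
  · simp

theorem exists_isPath_mem_support_of_twoInternallyDisjointPaths
    (hG : ∀ s t, s ≠ t → TwoInternallyDisjointPaths G s t) {u v : V} (huv : u ≠ v) (x : V) :
    ∃ r : G.Walk u v, r.IsPath ∧ x ∈ r.support := by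
  classical
  obtain ⟨w, -, hw, -⟩ := hG u v huv
  by_cases hxu : x = u
  · exact ⟨w, hw, hxu ▸ w.start_mem_support⟩
  by_cases hxv : x = v
  · exact ⟨w, hw, hxv ▸ w.end_mem_support⟩
  obtain ⟨P, Q, hP, hQ, -, hPQ⟩ := hG x u hxu
  let T : Set V := {a | a ∈ P.support ∨ a ∈ Q.support}
  suffices ∃ s ∈ T, s ≠ u ∧ ∃ S : G.Walk v s, S.IsPath ∧ ∀ a ∈ S.support, a ∈ T → a = s by
    obtain ⟨s, hsP | hsQ, hsu, S, hS, hST⟩ := this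
    · exact exists_isPath_mem_support_of_path_to_cycle hP hQ hPQ hS hsP hsu hST
    · exact exists_isPath_mem_support_of_path_to_cycle hQ hP (fun a hQ hP => hPQ a hP hQ) hS hsQ
        hsu fun a ha h => hST a ha h.symm
  -- Of two internally disjoint `v`-`x` paths, at most one first meets `P ∪ Q` at `u`.
  obtain ⟨R, S, hR, hS, -, hRS⟩ := hG v x (Ne.symm hxv)
  have hxT : x ∈ T := .inl P.start_mem_support
  obtain ⟨r, hrT, R', hR', hR'R, hR'T⟩ := hR.exists_isPath_first_mem T hxT
  obtain ⟨s, hsT, S', hS', hS'S, hS'T⟩ := hS.exists_isPath_first_mem T hxT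
  by_cases hru : r = u
  · refine ⟨s, hsT, ?_, S', hS', hS'T⟩
    rintro rfl
    rcases hRS r (hR'R R'.end_mem_support) (hru ▸ hS'S S'.end_mem_support) with h | h
    · exact huv (hru ▸ h)
    · exact hxu (hru ▸ h).symm
  · exact ⟨r, hrT, hru, R', hR', hR'T⟩

end

namespace AddPath

variable {V : Type*} {G : SimpleGraph V} {u v : V} {n : ℕ}

theorem adj_inl {x y : V} (h : G.Adj x y) : (AddPath G u v n).Adj (.inl x) (.inl y) := by
  simp [AddPath, h, h.ne]

theorem adj_inl_inr {i : Fin n} (hi : (i : ℕ) = 0) :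
    (AddPath G u v n).Adj (.inl u) (.inr i) := by
  simp [AddPath, hi]

theorem adj_inr_inr {i j : Fin n} (hij : (j : ℕ) = i + 1) :
    (AddPath G u v n).Adj (.inr i) (.inr j) := by
  simp only [AddPath, fromRel_adj, ne_eq, Sum.inr.injEq, Fin.ext_iff]
  exact ⟨by omega, .inl (.inr (.inr (.inr (.inr ⟨i, j, hij, rfl, rfl⟩))))⟩

theorem adj_inr_inl {i : Fin n} (hi : (i : ℕ) = n - 1) :
    (AddPath G u v n).Adj (.inr i) (.inl v) := by
  simp [AddPath, hi]

variable (G u v n) in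
def inlHom : G →g AddPath G u v n := ⟨Sum.inl, adj_inl⟩

-- A copy of `r.map (inlHom G u v n)` whose type names the endpoints `.inl x`, `.inl y`
-- syntactically, so that it can be rewritten inside `Walk.append`.
variable (u v n) in
def mapWalk {x y : V} (r : G.Walk x y) : (AddPath G u v n).Walk (.inl x) (.inl y) :=
  r.map (inlHom G u v n)

@[simp] theorem support_mapWalk {x y : V} (r : G.Walk x y) :
    (mapWalk u v n r).support = r.support.map Sum.inl :=
  Walk.support_map _ _

variable (G u v) in
def walkToEnd (i : Fin n) : (AddPath G u v n).Walk (.inr i) (.inl v) :=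
  if h : (i : ℕ) + 1 < n then .cons (adj_inr_inr (j := ⟨i + 1, h⟩) rfl) (walkToEnd ⟨i + 1, h⟩)
  else (adj_inr_inl (by omega)).toWalk
termination_by n - i

theorem inr_mem_support_walkToEnd {i j : Fin n} :
    .inr j ∈ (walkToEnd G u v i).support ↔ i ≤ j := by
  induction i using walkToEnd.induct with
  | case1 i h ih =>
    rw [walkToEnd, dif_pos h]
    simp only [Walk.support_cons, List.mem_cons, Sum.inr.injEq, ih, Fin.le_def, Fin.ext_iff]
    omega
  | case2 i h =>
    rw [walkToEnd, dif_neg h]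
    simp only [Adj.toWalk, Walk.support_cons, Walk.support_nil, List.mem_cons, Sum.inr.injEq,
      reduceCtorEq, List.mem_nil_iff, or_false, Fin.le_def, Fin.ext_iff]
    omega

theorem inl_mem_support_walkToEnd {i : Fin n} {x : V} :
    .inl x ∈ (walkToEnd G u v i).support ↔ x = v := by
  induction i using walkToEnd.induct with
  | case1 i h ih => rw [walkToEnd, dif_pos h]; simp [ih]
  | case2 i h => rw [walkToEnd, dif_neg h]; simp

theorem isPath_walkToEnd (i : Fin n) : (walkToEnd G u v i).IsPath := by
  induction i using walkToEnd.induct with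
  | case1 i h ih =>
    rw [walkToEnd, dif_pos h]
    exact ih.cons (by simp only [inr_mem_support_walkToEnd, Fin.le_def]; omega)
  | case2 i h => rw [walkToEnd, dif_neg h]; exact Adj.isPath_toWalk _

theorem isCycle_cons_walkToEnd_append (huv : u ≠ v) (hn : 0 < n) {r : G.Walk v u}
    (hr : r.IsPath) :
    (Walk.cons (adj_inl_inr (i := ⟨0, hn⟩) rfl)
      ((walkToEnd G u v ⟨0, hn⟩).append (mapWalk u v n r))).IsCycle := by
  refine (Walk.cons_isCycle_iff _ _).mpr
    ⟨(isPath_walkToEnd _).append (hr.map Sum.inl_injective) ?_, ?_⟩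
  · simp only [support_mapWalk, List.mem_map]
    rintro _ hx ⟨x, -, rfl⟩
    rw [inl_mem_support_walkToEnd.mp hx]
  · rw [Walk.edges_append, List.mem_append]
    rintro (he | he)
    · exact huv (inl_mem_support_walkToEnd.mp (Walk.fst_mem_support_of_mem_edges _ he))
    · simpa using (mapWalk u v n r).snd_mem_support_of_mem_edges he

theorem exists_isCycle_mem_support (hG : ∀ s t, s ≠ t → TwoInternallyDisjointPaths G s t)
    (huv : u ≠ v) (hn : 0 < n) (x : V) :
    ∃ c : (AddPath G u v n).Walk (.inl u) (.inl u),
      c.IsCycle ∧ .inl x ∈ c.support ∧ ∀ i, .inr i ∈ c.support := by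
  obtain ⟨r, hr, hx⟩ := exists_isPath_mem_support_of_twoInternallyDisjointPaths hG huv.symm x
  refine ⟨_, isCycle_cons_walkToEnd_append huv hn hr, ?_, fun i => ?_⟩
  · simp [hx]
  · simp [inr_mem_support_walkToEnd, Fin.le_def]

end AddPath

/-- Adding a simple path between two distinct vertices `u, v` of a 2-connected graph `G`
(with new internal vertices not in `G`) results in a 2-connected graph. -/
theorem addPath_twoConnected {V : Type*} [Fintype V] (G : SimpleGraph V)
    (hG : TwoConnected G) (u v : V) (huv : u ≠ v) (n : ℕ) :
    TwoConnected (AddPath G u v n) := by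
  obtain ⟨hcard, hG⟩ := hG
  refine ⟨by rw [Fintype.card_sum, Fintype.card_fin]; omega, ?_⟩
  rintro (x | i) (y | j) hst
  · exact (hG x y (ne_of_apply_ne _ hst)).map (AddPath.inlHom G u v n) Sum.inl_injective
  · obtain ⟨c, hc, hx, hi⟩ := AddPath.exists_isCycle_mem_support hG huv j.pos x
    exact hc.twoInternallyDisjointPaths_of_mem hx (hi j) hst
  · obtain ⟨c, hc, hy, hi⟩ := AddPath.exists_isCycle_mem_support hG huv i.pos y
    exact hc.twoInternallyDisjointPaths_of_mem (hi i) hy hst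
  · obtain ⟨c, hc, -, hi⟩ := AddPath.exists_isCycle_mem_support hG huv i.pos u
    exact hc.twoInternallyDisjointPaths_of_mem (hi i) (hi j) hst
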